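/- Let P be a finite lattice. For every transfer system R on P, the fiber {R' ∈ Tr(P) | χ^{R'} = χ^R} of the characteristic map has a greatest element (in the refinement order). Moreover, a transfer system R is the greatest element of its own fiber if and only if R is saturated; equivalently, the set of greatest elements of fibers of χ is exactly the set of saturated transfer systems on P, and the greatest element of the fiber of R is R_sat, the least saturated transfer system containing R. -/

import Mathlib

/-! Every transfer system `T` with characteristic function `m` satisfies `m x = m y` whenever
`x T y`, so `T` refines the relation `x ≤ y ∧ m x = m y`. That relation is itself a saturated
transfer system with characteristic function `m`: it is the greatest element of the fiber over
`m`, and a saturated system with characteristic function `m` already contains it. The least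
saturated system above `R` lies between `R` and this relation, so it shares the characteristic
function of `R`. -/

/-- A transfer system on a lattice `P`: a partial order refining `≤`
(reflexive, transitive, and refining `≤`, hence antisymmetric) that is
closed under restriction. -/
structure TransferSystem (P : Type*) [Lattice P] where
  rel : P → P → Prop
  refl : ∀ x, rel x x
  trans : ∀ x y z, rel x y → rel y z → rel x z
  le_of_rel : ∀ x y, rel x y → x ≤ y
  restrict : ∀ x y z, rel x z → y ≤ z → rel (x ⊓ y) y

/-- A transfer system is saturated when `x R y ≤ z` and `x R z` imply `y R z`. -/
def TransferSystem.Saturated {P : Type*} [Lattice P] (R : TransferSystem P) : Prop :=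
  ∀ x y z, R.rel x y → y ≤ z → R.rel x z → R.rel y z

namespace TransferSystem

variable {P : Type*} [Lattice P]

theorem rel_of_rel_of_le {R : TransferSystem P} {a b c : P} (hac : R.rel a c) (hab : a ≤ b)
    (hbc : b ≤ c) : R.rel a b := by
  simpa [inf_eq_left.2 hab] using R.restrict a b c hac hbc

def IsCharFun (R : TransferSystem P) (m : P → P) : Prop :=
  ∀ x, IsLeast {y | R.rel y x} (m x)

namespace IsCharFun

variable {R : TransferSystem P} {m : P → P}

theorem rel (h : R.IsCharFun m) (x : P) : R.rel (m x) x :=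
  (h x).1

theorem le_of_rel (h : R.IsCharFun m) {x y : P} (hxy : R.rel x y) : m y ≤ x :=
  (h y).2 hxy

theorem le (h : R.IsCharFun m) (x : P) : m x ≤ x :=
  R.le_of_rel _ _ (h.rel x)

theorem eq_of_rel (h : R.IsCharFun m) {x y : P} (hxy : R.rel x y) : m x = m y :=
  le_antisymm (h.le_of_rel (rel_of_rel_of_le (h.rel y) (h.le_of_rel hxy) (R.le_of_rel _ _ hxy)))
    (h.le_of_rel (R.trans _ _ _ (h.rel x) hxy))

theorem unique {m' : P → P} (h : R.IsCharFun m) (h' : R.IsCharFun m') : m = m' :=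
  funext fun x => (h x).unique (h' x)

end IsCharFun

variable {R : TransferSystem P} {m : P → P}

/-- The greatest transfer system with characteristic function `m`, where `m` is that of `R`. -/
def saturation (R : TransferSystem P) (m : P → P) (h : R.IsCharFun m) : TransferSystem P where
  rel x y := x ≤ y ∧ m x = m y
  refl _ := ⟨le_rfl, rfl⟩
  trans _ _ _ hxy hyz := ⟨hxy.1.trans hyz.1, hxy.2.trans hyz.2⟩
  le_of_rel _ _ hxy := hxy.1
  restrict x y z hxz hyz := by
    refine ⟨inf_le_right, ?_⟩
    -- `m z ⊓ y` is below `x ⊓ y` and relates to `y`, hence to `x ⊓ y`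
    have hzy : R.rel (m z ⊓ y) y := R.restrict _ _ _ (h.rel z) hyz
    have hle : m z ⊓ y ≤ x ⊓ y := inf_le_inf_right y (hxz.2 ▸ h.le x)
    rw [← h.eq_of_rel (rel_of_rel_of_le hzy hle inf_le_right), h.eq_of_rel hzy]

theorem saturated_saturation (h : R.IsCharFun m) : (R.saturation m h).Saturated :=
  fun _ _ _ hxy hyz hxz => ⟨hyz, hxy.2.symm.trans hxz.2⟩

theorem rel_saturation_of_isCharFun (h : R.IsCharFun m) {T : TransferSystem P}
    (hT : T.IsCharFun m) {x y : P} (hxy : T.rel x y) : (R.saturation m h).rel x y :=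
  ⟨T.le_of_rel _ _ hxy, hT.eq_of_rel hxy⟩

theorem isCharFun_of_le_saturation (h : R.IsCharFun m) {S : TransferSystem P}
    (hRS : ∀ x y, R.rel x y → S.rel x y) (hS : ∀ x y, S.rel x y → (R.saturation m h).rel x y) :
    S.IsCharFun m :=
  fun x => ⟨hRS _ _ (h.rel x), fun y hy => (hS y x hy).2 ▸ h.le y⟩

theorem isCharFun_saturation (h : R.IsCharFun m) : (R.saturation m h).IsCharFun m :=
  isCharFun_of_le_saturation h (fun _ _ => rel_saturation_of_isCharFun h h) fun _ _ => id

theorem saturated_iff_rel_of_rel_saturation (h : R.IsCharFun m) :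
    R.Saturated ↔ ∀ x y, (R.saturation m h).rel x y → R.rel x y := by
  constructor
  · rintro hR x y ⟨hxy, hm⟩
    exact hR (m x) x y (h.rel x) hxy (hm ▸ h.rel y)
  · intro hR x y z hxy hyz hxz
    exact hR y z ⟨hyz, (h.eq_of_rel hxy).symm.trans (h.eq_of_rel hxz)⟩

theorem saturated_iff_forall_isCharFun (h : R.IsCharFun m) :
    R.Saturated ↔ ∀ T : TransferSystem P, T.IsCharFun m → ∀ x y, T.rel x y → R.rel x y := by
  rw [saturated_iff_rel_of_rel_saturation h]
  exact ⟨fun hR T hT x y hxy => hR x y (rel_saturation_of_isCharFun h hT hxy),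
    fun hR => hR _ (isCharFun_saturation h)⟩

end TransferSystem

open TransferSystem in
theorem stmt6_general (P : Type*) [Lattice P]
    (chi : TransferSystem P → P → P)
    (hchi : ∀ (R : TransferSystem P) (x : P), IsLeast {y : P | R.rel y x} (chi R x)) :
    (∀ R : TransferSystem P, ∃ S : TransferSystem P, chi S = chi R ∧
        ∀ T : TransferSystem P, chi T = chi R → ∀ x y, T.rel x y → S.rel x y) ∧
    (∀ R : TransferSystem P,
        (∀ T : TransferSystem P, chi T = chi R → ∀ x y, T.rel x y → R.rel x y) ↔
          R.Saturated) ∧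
    (∀ R Rsat : TransferSystem P,
        Rsat.Saturated → (∀ x y, R.rel x y → Rsat.rel x y) →
        (∀ S : TransferSystem P, S.Saturated → (∀ x y, R.rel x y → S.rel x y) →
            ∀ x y, Rsat.rel x y → S.rel x y) →
        chi Rsat = chi R ∧
          ∀ T : TransferSystem P, chi T = chi R → ∀ x y, T.rel x y → Rsat.rel x y) := by
  have mem_fiber : ∀ R T : TransferSystem P, chi T = chi R ↔ T.IsCharFun (chi R) :=
    fun R T => ⟨fun hT => hT ▸ hchi T, IsCharFun.unique (hchi T)⟩
  have greatest_iff : ∀ R : TransferSystem P,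
      (∀ T : TransferSystem P, chi T = chi R → ∀ x y, T.rel x y → R.rel x y) ↔ R.Saturated :=
    fun R => by simp only [mem_fiber]; exact (saturated_iff_forall_isCharFun (hchi R)).symm
  refine ⟨fun R => ?_, greatest_iff, fun R Rsat hsat hsub hleast => ?_⟩
  · exact ⟨R.saturation (chi R) (hchi R), (mem_fiber _ _).2 (isCharFun_saturation (hchi R)),
      fun T hT _ _ => rel_saturation_of_isCharFun (hchi R) ((mem_fiber R T).1 hT)⟩
  · have hchi_eq : chi Rsat = chi R :=
      (mem_fiber R Rsat).2 <| isCharFun_of_le_saturation (hchi R) hsub <|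
        hleast _ (saturated_saturation (hchi R))
          fun _ _ => rel_saturation_of_isCharFun (hchi R) (hchi R)
    exact ⟨hchi_eq, fun T hT => (greatest_iff Rsat).2 hsat T (hT.trans hchi_eq.symm)⟩

/-- every fiber of the characteristic map χ has a greatest
element; a transfer system is the greatest element of its own fiber iff it is
saturated; and the greatest element of the fiber of R is R_sat, the least
saturated transfer system containing R. -/
theorem stmt6 (P : Type*) [Lattice P] [Finite P]
    (chi : TransferSystem P → P → P)
    (hchi : ∀ (R : TransferSystem P) (x : P), IsLeast {y : P | R.rel y x} (chi R x)) :
    (∀ R : TransferSystem P, ∃ S : TransferSystem P, chi S = chi R ∧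
        ∀ T : TransferSystem P, chi T = chi R → ∀ x y, T.rel x y → S.rel x y) ∧
    (∀ R : TransferSystem P,
        (∀ T : TransferSystem P, chi T = chi R → ∀ x y, T.rel x y → R.rel x y) ↔
          R.Saturated) ∧
    (∀ R Rsat : TransferSystem P,
        Rsat.Saturated → (∀ x y, R.rel x y → Rsat.rel x y) →
        (∀ S : TransferSystem P, S.Saturated → (∀ x y, R.rel x y → S.rel x y) →
            ∀ x y, Rsat.rel x y → S.rel x y) →
        chi Rsat = chi R ∧
          ∀ T : TransferSystem P, chi T = chi R → ∀ x y, T.rel x y → Rsat.rel x y) :=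
  stmt6_general P chi hchi
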